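/- There do not exist vectors w_0, …, w_8 ∈ ℝ² and reals h_0, …, h_8 such that (w_0,…,w_8) is an admissible extended-Gale configuration for C_6(9) and the intersection heights satisfy the chain of strict inequalities z_{458} < z_{258} < z_{238} < z_{278} < z_{478} < z_{078} < z_{058} < z_{038} < z_{018} < z_{014} < z_{012} < z_{016} < z_{036} < z_{034} < z_{345} < z_{234} < z_{347} < z_{147} < z_{127} < z_{167} < z_{678} < z_{367} < z_{567} < z_{056} < z_{456} < z_{256} < z_{236} < z_{123} < z_{125} < z_{145}. (This is the nonrealizability of the Hamilton HK AOF orientation NR_1^6 of the graph of C_6(9)^Δ.) -/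

import Mathlib

noncomputable section

/-- For `v = (x, y) ∈ ℝ²`, `u · v^⊥ = det(u, v)` where `v^⊥ = (y, -x)`. -/
def dperp (u v : ℝ × ℝ) : ℝ := u.1 * v.2 - u.2 * v.1

/-- `[p q r]`: the determinant of the 3×3 matrix with columns `(pₓ,p_y,1)`, `(qₓ,q_y,1)`,
`(rₓ,r_y,1)`. -/
def tdet (p q r : ℝ × ℝ) : ℝ :=
  p.1 * (q.2 - r.2) - q.1 * (p.2 - r.2) + r.1 * (p.2 - q.2)

/-- The intersection height
`z(u,h_u; v,h_v; w,h_w) = ((u·v^⊥)·h_w + (w·u^⊥)·h_v + (v·w^⊥)·h_u) / [u v w]`. -/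
def iheight (u v w : ℝ × ℝ) (hu hv hw : ℝ) : ℝ :=
  (dperp u v * hw + dperp w u * hv + dperp v w * hu) / tdet u v w

/-- The 30 vertex triples of `C₆(9)^Δ`: complements in `{0,…,8}` of the facets of the
cyclic polytope `C₆(9)` given by Gale's evenness criterion. -/
def C69triples : Set (Fin 9 × Fin 9 × Fin 9) :=
  {(0, 1, 2), (0, 1, 4), (0, 1, 6), (0, 1, 8), (0, 3, 4), (0, 3, 6), (0, 3, 8), (0, 5, 6), (0, 5, 8), (0, 7, 8), (1, 2, 3), (1, 2, 5), (1, 2, 7), (1, 4, 5), (1, 4, 7), (1, 6, 7), (2, 3, 4), (2, 3, 6), (2, 3, 8), (2, 5, 6), (2, 5, 8), (2, 7, 8), (3, 4, 5), (3, 4, 7), (3, 6, 7), (4, 5, 6), (4, 5, 8), (4, 7, 8), (5, 6, 7), (6, 7, 8)}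

/-- `(w₀, …, w₈)` is an admissible extended-Gale configuration for `C₆(9)`: the `w_a` are
positive multiples of unit vectors in clockwise radial order `0, 2, 4, 6, 8, 1, 3, 5, 7`
around the origin, a 3-element subset `{i < j < k}` of `{0,…,8}` has `0` in the interior
of `conv {wᵢ, wⱼ, w_k}` iff it is one of the 30 vertex triples, and each vertex triple
has `[wᵢ wⱼ w_k] > 0`. -/
def AdmissibleC69 (w : Fin 9 → ℝ × ℝ) : Prop :=
  (∃ θ r : Fin 9 → ℝ,
    (∀ a : Fin 9, 0 < r a ∧ w a = (r a * Real.cos (θ a), r a * Real.sin (θ a))) ∧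
    θ 0 > θ 2 ∧ θ 2 > θ 4 ∧ θ 4 > θ 6 ∧ θ 6 > θ 8 ∧ θ 8 > θ 1 ∧ θ 1 > θ 3 ∧ θ 3 > θ 5 ∧
    θ 5 > θ 7 ∧ θ 7 > θ 0 - 2 * Real.pi) ∧
  (∀ i j k : Fin 9, i < j → j < k →
    ((0 : ℝ × ℝ) ∈ interior (convexHull ℝ {w i, w j, w k}) ↔ (i, j, k) ∈ C69triples)) ∧
  (∀ i j k : Fin 9, (i, j, k) ∈ C69triples → 0 < tdet (w i) (w j) (w k))

/-- The intersection height `z_{ijk}` determined by the configuration `w` and the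
lifting heights `h`. -/
def zC69 (w : Fin 9 → ℝ × ℝ) (h : Fin 9 → ℝ) (i j k : Fin 9) : ℝ :=
  iheight (w i) (w j) (w k) (h i) (h j) (h k)

/-!
Lift each `w a` to the point `(w a, 1, h a)` of `ℝ⁴`. The height `z_{abc}` is the value over the
origin of the affine function interpolating the heights at `w a, w b, w c`, and for two vertex
triples `abc`, `abd` sharing the edge `ab` one has
`(z_{abd} - z_{abc}) [w_a w_b w_c] [w_a w_b w_d] = -(w_a · w_b^⊥) [a b c d]`,
where `[a b c d]` is the `4 × 4` determinant of the lifted points. As the origin lies inside each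
positive vertex triangle, `w_a · w_b^⊥ > 0`, so each of nine comparisons read off the chain fixes
the sign of a `4 × 4` determinant. These nine signs are incompatible with two three-term
Grassmann–Plücker relations.
-/

def PosTriangleAroundOrigin (p q r : ℝ × ℝ) : Prop :=
  (0 : ℝ × ℝ) ∈ interior (convexHull ℝ {p, q, r}) ∧ 0 < tdet p q r

theorem tdet_rotate (p q r : ℝ × ℝ) : tdet q r p = tdet p q r := by
  unfold tdet; ring

theorem iheight_rotate (u v w : ℝ × ℝ) (hu hv hw : ℝ) :
    iheight u v w hu hv hw = iheight v w u hv hw hu := by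
  unfold iheight dperp tdet; ring_nf

namespace PosTriangleAroundOrigin

variable {p q r : ℝ × ℝ}

theorem rotate (h : PosTriangleAroundOrigin p q r) : PosTriangleAroundOrigin q r p := by
  have hull : ({q, r, p} : Set (ℝ × ℝ)) = {p, q, r} := by
    ext; simp only [Set.mem_insert_iff, Set.mem_singleton_iff]; tauto
  rw [PosTriangleAroundOrigin, hull, tdet_rotate]
  exact h

/- The affine function `ℓ + dperp p q` vanishes at `p` and `q` and is positive at `r`, so it is
nonnegative on the triangle; were its value `dperp p q` at the origin `≤ 0`, it would be negative
at the points `-t • r`, `t > 0`, which lie in the triangle for small `t`. -/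
theorem dperp_pos (h : PosTriangleAroundOrigin p q r) : 0 < dperp p q := by
  obtain ⟨h0, hpqr⟩ := h
  set ℓ : ℝ × ℝ → ℝ := fun x => (p.2 - q.2) * x.1 + (q.1 - p.1) * x.2
  have hℓ : IsLinearMap ℝ ℓ :=
    ⟨fun x y => by simp only [ℓ, Prod.fst_add, Prod.snd_add]; ring,
     fun c x => by simp only [ℓ, Prod.smul_fst, Prod.smul_snd, smul_eq_mul]; ring⟩
  have hℓr : ℓ r = tdet p q r - dperp p q := by simp only [ℓ, dperp, tdet]; ring
  have hull_sub : convexHull ℝ {p, q, r} ⊆ {x | -dperp p q ≤ ℓ x} := by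
    refine convexHull_min ?_ (convex_halfSpace_ge hℓ _)
    simp only [Set.insert_subset_iff, Set.singleton_subset_iff, Set.mem_ofPred_eq]
    refine ⟨le_of_eq ?_, le_of_eq ?_, by linarith⟩ <;> simp only [ℓ, dperp] <;> ring
  obtain ⟨ε, hε, hball⟩ := Metric.eventually_nhds_iff.1
    ((continuous_id.smul continuous_const : Continuous fun t : ℝ => t • r).tendsto' 0 0
      (zero_smul ℝ r) |>.eventually (mem_interior_iff_mem_nhds.1 h0))
  have hmem : -dperp p q ≤ ℓ ((-(ε / 2)) • r) := hull_sub (hball (y := -(ε / 2))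
    (by rw [Real.dist_0_eq_abs, abs_neg, abs_of_pos (half_pos hε)]; linarith))
  rw [hℓ.map_smul, smul_eq_mul, hℓr] at hmem
  by_contra! hpq
  nlinarith

end PosTriangleAroundOrigin

section LiftedPoints

variable {ι : Type*} (w : ι → ℝ × ℝ) (h : ι → ℝ)

/-- The determinant of the `4 × 4` matrix with rows `(w a, 1, h a)`, `(w b, 1, h b)`,
`(w c, 1, h c)`, `(w d, 1, h d)`, expanded along the last column. -/
def liftDet (a b c d : ι) : ℝ :=
  tdet (w b) (w c) (w d) * h a - tdet (w a) (w c) (w d) * h b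
    + tdet (w a) (w b) (w d) * h c - tdet (w a) (w b) (w c) * h d

theorem iheight_sub_iheight_mul_tdet_mul_tdet {a b c d : ι}
    (hc : tdet (w a) (w b) (w c) ≠ 0) (hd : tdet (w a) (w b) (w d) ≠ 0) :
    (iheight (w a) (w b) (w d) (h a) (h b) (h d) - iheight (w a) (w b) (w c) (h a) (h b) (h c))
        * (tdet (w a) (w b) (w c) * tdet (w a) (w b) (w d))
      = -(dperp (w a) (w b) * liftDet w h a b c d) := by
  unfold iheight
  field_simp
  unfold liftDet dperp tdet
  ring

variable {w h}

theorem liftDet_neg_of_iheight_lt {a b c d : ι}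
    (hc : PosTriangleAroundOrigin (w a) (w b) (w c)) (hd : 0 < tdet (w a) (w b) (w d))
    (hz : iheight (w a) (w b) (w c) (h a) (h b) (h c)
      < iheight (w a) (w b) (w d) (h a) (h b) (h d)) :
    liftDet w h a b c d < 0 := by
  have key := iheight_sub_iheight_mul_tdet_mul_tdet w h hc.2.ne' hd.ne'
  have : dperp (w a) (w b) * liftDet w h a b c d < 0 := by
    linarith [mul_pos (sub_pos.2 hz) (mul_pos hc.2 hd)]
  exact neg_of_mul_neg_right this hc.dperp_pos.le

end LiftedPoints

theorem AdmissibleC69.posTriangleAroundOrigin {w : Fin 9 → ℝ × ℝ} (hw : AdmissibleC69 w)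
    {i j k : Fin 9} (hijk : (i, j, k) ∈ C69triples) :
    PosTriangleAroundOrigin (w i) (w j) (w k) := by
  have hlt : i < j ∧ j < k := by
    simp only [C69triples, Set.mem_insert_iff, Set.mem_singleton_iff, Prod.mk.injEq] at hijk
    omega
  exact ⟨(hw.2.1 i j k hlt.1 hlt.2).2 hijk, hw.2.2 i j k hijk⟩

theorem NR16_liftDet_signs_inconsistent (w : Fin 9 → ℝ × ℝ) (h : Fin 9 → ℝ)
    (e0126 : liftDet w h 0 1 2 6 < 0) (e1678 : liftDet w h 6 7 1 8 < 0)
    (e0167 : liftDet w h 1 6 0 7 < 0) (e0123 : liftDet w h 1 2 0 3 < 0)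
    (e1238 : liftDet w h 2 3 8 1 < 0) (e0128 : liftDet w h 0 1 8 2 < 0)
    (e1236 : liftDet w h 2 3 6 1 < 0) (e0168 : liftDet w h 0 1 8 6 < 0)
    (e1267 : liftDet w h 7 1 2 6 < 0) : False := by
  -- the Grassmann–Plücker relations for the pairs `{1, 2}` and `{1, 6}`
  have gp12 : liftDet w h 1 2 0 3 * liftDet w h 1 2 6 8 + liftDet w h 0 1 2 6 * liftDet w h 2 3 8 1
      + liftDet w h 0 1 8 2 * liftDet w h 2 3 6 1 = 0 := by
    unfold liftDet tdet; ring
  have gp16 : liftDet w h 1 6 0 7 * liftDet w h 1 2 6 8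
      = liftDet w h 0 1 2 6 * liftDet w h 6 7 1 8 + liftDet w h 0 1 8 6 * liftDet w h 7 1 2 6 := by
    unfold liftDet tdet; ring
  have e1268 : 0 < liftDet w h 1 2 6 8 := by
    refine pos_of_mul_neg_right (a := liftDet w h 1 2 0 3) ?_ e0123.le
    linarith [mul_pos_of_neg_of_neg e0126 e1238, mul_pos_of_neg_of_neg e0128 e1236]
  linarith [mul_neg_of_neg_of_pos e0167 e1268, mul_pos_of_neg_of_neg e0126 e1678,
    mul_pos_of_neg_of_neg e0168 e1267]

/-- **Nonrealizability of the Hamilton HK AOF orientation `NR₁⁶` of the graph of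
`C₆(9)^Δ`**: no admissible extended-Gale configuration for `C₆(9)` with lifting heights
realizes the vertex ordering
`458 < 258 < 238 < 278 < 478 < 078 < 058 < 038 < 018 < 014 < 012 < 016 < 036 < 034 < 345 < 234 < 347 < 147 < 127 < 167 < 678 < 367 < 567 < 056 < 456 < 256 < 236 < 123 < 125 < 145`. -/
theorem NR16_not_realizable :
    ¬ ∃ (w : Fin 9 → ℝ × ℝ) (h : Fin 9 → ℝ),
      AdmissibleC69 w ∧
      (zC69 w h 4 5 8 < zC69 w h 2 5 8 ∧
       zC69 w h 2 5 8 < zC69 w h 2 3 8 ∧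
       zC69 w h 2 3 8 < zC69 w h 2 7 8 ∧
       zC69 w h 2 7 8 < zC69 w h 4 7 8 ∧
       zC69 w h 4 7 8 < zC69 w h 0 7 8 ∧
       zC69 w h 0 7 8 < zC69 w h 0 5 8 ∧
       zC69 w h 0 5 8 < zC69 w h 0 3 8 ∧
       zC69 w h 0 3 8 < zC69 w h 0 1 8 ∧
       zC69 w h 0 1 8 < zC69 w h 0 1 4 ∧
       zC69 w h 0 1 4 < zC69 w h 0 1 2 ∧
       zC69 w h 0 1 2 < zC69 w h 0 1 6 ∧
       zC69 w h 0 1 6 < zC69 w h 0 3 6 ∧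
       zC69 w h 0 3 6 < zC69 w h 0 3 4 ∧
       zC69 w h 0 3 4 < zC69 w h 3 4 5 ∧
       zC69 w h 3 4 5 < zC69 w h 2 3 4 ∧
       zC69 w h 2 3 4 < zC69 w h 3 4 7 ∧
       zC69 w h 3 4 7 < zC69 w h 1 4 7 ∧
       zC69 w h 1 4 7 < zC69 w h 1 2 7 ∧
       zC69 w h 1 2 7 < zC69 w h 1 6 7 ∧
       zC69 w h 1 6 7 < zC69 w h 6 7 8 ∧
       zC69 w h 6 7 8 < zC69 w h 3 6 7 ∧
       zC69 w h 3 6 7 < zC69 w h 5 6 7 ∧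
       zC69 w h 5 6 7 < zC69 w h 0 5 6 ∧
       zC69 w h 0 5 6 < zC69 w h 4 5 6 ∧
       zC69 w h 4 5 6 < zC69 w h 2 5 6 ∧
       zC69 w h 2 5 6 < zC69 w h 2 3 6 ∧
       zC69 w h 2 3 6 < zC69 w h 1 2 3 ∧
       zC69 w h 1 2 3 < zC69 w h 1 2 5 ∧
       zC69 w h 1 2 5 < zC69 w h 1 4 5) := by
  rintro ⟨w, h, hw, z1, z2, z3, z4, z5, z6, z7, z8, z9, z10, z11, z12, z13, z14, z15, z16, z17,
    z18, z19, z20, z21, z22, z23, z24, z25, z26, z27, -, -⟩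
  obtain ⟨t012, t016, t018, t123, t127, t167, t236, t238, t678⟩ :
      PosTriangleAroundOrigin (w 0) (w 1) (w 2) ∧ PosTriangleAroundOrigin (w 0) (w 1) (w 6) ∧
      PosTriangleAroundOrigin (w 0) (w 1) (w 8) ∧ PosTriangleAroundOrigin (w 1) (w 2) (w 3) ∧
      PosTriangleAroundOrigin (w 1) (w 2) (w 7) ∧ PosTriangleAroundOrigin (w 1) (w 6) (w 7) ∧
      PosTriangleAroundOrigin (w 2) (w 3) (w 6) ∧ PosTriangleAroundOrigin (w 2) (w 3) (w 8) ∧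
      PosTriangleAroundOrigin (w 6) (w 7) (w 8) := by
    refine ⟨?_, ?_, ?_, ?_, ?_, ?_, ?_, ?_, ?_⟩ <;>
      exact hw.posTriangleAroundOrigin (by simp [C69triples])
  have rot (i j k : Fin 9) : zC69 w h j k i = zC69 w h i j k := (iheight_rotate _ _ _ _ _ _).symm
  exact NR16_liftDet_signs_inconsistent w h
    (liftDet_neg_of_iheight_lt t012 t016.2 z11)
    (liftDet_neg_of_iheight_lt t167.rotate t678.2 ((rot 1 6 7).trans_lt z20))
    (liftDet_neg_of_iheight_lt t016.rotate t167.2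
      ((rot 0 1 6).trans_lt (by linarith : zC69 w h 0 1 6 < zC69 w h 1 6 7)))
    (liftDet_neg_of_iheight_lt t012.rotate t123.2
      ((rot 0 1 2).trans_lt (by linarith : zC69 w h 0 1 2 < zC69 w h 1 2 3)))
    (liftDet_neg_of_iheight_lt t238 t123.rotate.2
      ((by linarith : zC69 w h 2 3 8 < zC69 w h 1 2 3).trans_eq (rot 1 2 3).symm))
    (liftDet_neg_of_iheight_lt t018 t012.2 (z9.trans z10))
    (liftDet_neg_of_iheight_lt t236 t123.rotate.2 (z27.trans_eq (rot 1 2 3).symm))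
    (liftDet_neg_of_iheight_lt t018 t016.2 ((z9.trans z10).trans z11))
    (liftDet_neg_of_iheight_lt t127.rotate.rotate t167.rotate.rotate.2
      ((rot 7 1 2).symm.trans_lt (z19.trans_eq (rot 7 1 6))))
end
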